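/- Let (X,T) be a TDS, μ a T-invariant ergodic Borel probability measure on X, and ε > 0. Then the function x ↦ μ(B_ε^FK(x)) is μ-almost everywhere equal to the constant (μ×μ)({(x,y) ∈ X×X : ρ_FK(x,y) ≤ ε}), and this constant is either 0 or 1. -/

import Mathlib

/-!
The key point is that `ρ_FK` is invariant under `T` in each variable: shifting one of the two
orbits changes the maximal fit of an `(n, δ)`-match by at most one, hence `f̄_{n,δ}` by at most
`1/n`, which disappears in the `limsup`. For ergodic `μ`, invariance in the second variable makes
every ball `B_ε^FK(x)` an invariant set, of measure `0` or `1`; invariance in the first variable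
makes `x ↦ μ(B_ε^FK(x))` an invariant function, hence a.e. constant, and by Fubini that constant
is `(μ × μ){ρ_FK ≤ ε}`.
-/


open Filter Topology MeasureTheory Set

namespace FKPaper

variable {X : Type*} [MetricSpace X]

/-- The maximal fit of an `(n,δ)`-match between the orbits of `x` and `z` under `T`:
the largest cardinality of the domain of an order-preserving bijection
`π : D → R`, with `D, R ⊆ {0,…,n-1}` and `dist (T^[i] x) (T^[π i] z) < δ` for `i ∈ D`. -/
noncomputable def maxFit (T : X → X) (δ : ℝ) (n : ℕ) (x z : X) : ℕ :=
  sSup {k : ℕ | ∃ i j : Fin k → ℕ, StrictMono i ∧ StrictMono j ∧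
    (∀ s, i s < n) ∧ (∀ s, j s < n) ∧ ∀ s, dist (T^[i s] x) (T^[j s] z) < δ}

/-- `f̄_{n,δ}(x,z) = 1 - (maximal fit of an (n,δ)-match of x and z)/n`. -/
noncomputable def fbarN (T : X → X) (δ : ℝ) (n : ℕ) (x z : X) : ℝ :=
  1 - (maxFit T δ n x z : ℝ) / n

/-- `f̄_δ(x,z) = limsup_{n→∞} f̄_{n,δ}(x,z)`. -/
noncomputable def fbar (T : X → X) (δ : ℝ) (x z : X) : ℝ :=
  Filter.limsup (fun n => fbarN T δ n x z) Filter.atTop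

/-- The Feldman–Katok pseudometric `ρ_FK(x,z) = inf {δ > 0 : f̄_δ(x,z) < δ}`. -/
noncomputable def rhoFK (T : X → X) (x z : X) : ℝ :=
  sInf {δ : ℝ | 0 < δ ∧ fbar T δ x z < δ}

end FKPaper

theorem PreErgodic.ae_measure_prodMk_eq_prod {α : Type*} [MeasurableSpace α] {f : α → α}
    {μ : Measure α} [IsProbabilityMeasure μ] (hf : PreErgodic f μ) {A : Set (α × α)}
    (hA : MeasurableSet A) (hAf : ∀ x, Prod.mk (f x) ⁻¹' A = Prod.mk x ⁻¹' A) :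
    ∀ᵐ x ∂μ, μ (Prod.mk x ⁻¹' A) = μ.prod μ A := by
  obtain ⟨c, hc⟩ := hf.ae_eq_const_of_ae_eq_comp (measurable_measure_prodMk_left hA)
    (funext fun x => congrArg μ (hAf x))
  have hprod : μ.prod μ A = c := by
    rw [Measure.prod_apply hA, lintegral_congr_ae hc]
    simp
  rw [hprod]
  exact hc

theorem Filter.limsup_le_limsup_of_tendsto_sub {ι : Type*} {l : Filter ι} [l.NeBot]
    {u v : ι → ℝ} (hv : Bornology.IsBounded (range v))
    (huv : Tendsto (fun n => u n - v n) l (𝓝 0)) :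
    limsup u l ≤ limsup v l := by
  obtain ⟨a, ha⟩ := hv.bddBelow
  obtain ⟨b, hb⟩ := hv.bddAbove
  calc limsup u l = limsup (v + fun n => u n - v n) l := by congr 1; funext n; simp
    _ ≤ limsup v l + limsup (fun n => u n - v n) l :=
      limsup_add_le (isBoundedUnder_of ⟨a, fun n => ha (mem_range_self n)⟩)
        (isBoundedUnder_of ⟨b, fun n => hb (mem_range_self n)⟩)
        huv.isBoundedUnder_ge.isCoboundedUnder_le huv.isBoundedUnder_le
    _ = limsup v l := by rw [huv.limsup_eq, add_zero]

namespace FKPaper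

variable {X : Type*} [MetricSpace X] {T : X → X} {δ : ℝ} {n k : ℕ} {x y z : X}

def fitSet (T : X → X) (δ : ℝ) (n : ℕ) (x z : X) : Set ℕ :=
  {k : ℕ | ∃ i j : Fin k → ℕ, StrictMono i ∧ StrictMono j ∧
    (∀ s, i s < n) ∧ (∀ s, j s < n) ∧ ∀ s, dist (T^[i s] x) (T^[j s] z) < δ}

theorem zero_mem_fitSet : 0 ∈ fitSet T δ n x z :=
  ⟨Fin.elim0, Fin.elim0, fun s => s.elim0, fun s => s.elim0, fun s => s.elim0,
    fun s => s.elim0, fun s => s.elim0⟩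

theorem le_of_mem_fitSet (h : k ∈ fitSet T δ n x z) : k ≤ n := by
  obtain ⟨i, -, hi, -, hin, -⟩ := h
  simpa using Fintype.card_le_of_injective (fun s => (⟨i s, hin s⟩ : Fin n))
    fun a b hab => hi.injective (Fin.ext_iff.1 hab)

theorem bddAbove_fitSet : BddAbove (fitSet T δ n x z) :=
  ⟨n, fun _ => le_of_mem_fitSet⟩

theorem mem_fitSet_of_le {m : ℕ} (hkm : k ≤ m) (h : m ∈ fitSet T δ n x z) :
    k ∈ fitSet T δ n x z := by
  obtain ⟨i, j, hi, hj, hin, hjn, hd⟩ := h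
  exact ⟨i ∘ Fin.castLE hkm, j ∘ Fin.castLE hkm, hi.comp (Fin.strictMono_castLE hkm),
    hj.comp (Fin.strictMono_castLE hkm), fun s => hin _, fun s => hjn _, fun s => hd _⟩

theorem le_maxFit_iff : k ≤ maxFit T δ n x z ↔ k ∈ fitSet T δ n x z :=
  ⟨fun hk => mem_fitSet_of_le hk (Nat.sSup_mem ⟨0, zero_mem_fitSet⟩ bddAbove_fitSet),
    fun hk => le_csSup bddAbove_fitSet hk⟩

theorem maxFit_le : maxFit T δ n x z ≤ n :=
  le_of_mem_fitSet (le_maxFit_iff.1 le_rfl)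

theorem maxFit_mono {δ' : ℝ} (h : δ ≤ δ') : maxFit T δ n x z ≤ maxFit T δ' n x z := by
  obtain ⟨i, j, hi, hj, hin, hjn, hd⟩ := le_maxFit_iff.1 (le_refl (maxFit T δ n x z))
  exact le_maxFit_iff.2 ⟨i, j, hi, hj, hin, hjn, fun s => (hd s).trans_le h⟩

theorem maxFit_comm : maxFit T δ n x z = maxFit T δ n z x := by
  have key : ∀ x z : X, maxFit T δ n x z ≤ maxFit T δ n z x := fun x z => by
    obtain ⟨i, j, hi, hj, hin, hjn, hd⟩ := le_maxFit_iff.1 (le_refl (maxFit T δ n x z))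
    exact le_maxFit_iff.2 ⟨j, i, hj, hi, hjn, hin, fun s => dist_comm (T^[i s] x) _ ▸ hd s⟩
  exact (key x z).antisymm (key z x)

/-- Drop the last matched pair and shift the second orbit back by one step. -/
theorem mem_fitSet_of_succ_mem_fitSet_apply_right (h : k + 1 ∈ fitSet T δ n x (T y)) :
    k ∈ fitSet T δ n x y := by
  obtain ⟨i, j, hi, hj, hin, hjn, hd⟩ := h
  refine ⟨fun s => i s.castSucc, fun s => j s.castSucc + 1, hi.comp Fin.strictMono_castSucc,
    fun a b hab => Nat.add_lt_add_right (hj (Fin.castSucc_lt_castSucc_iff.2 hab)) 1,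
    fun s => hin _, fun s => Nat.lt_of_le_of_lt (hj (Fin.castSucc_lt_last s)) (hjn _),
    fun s => ?_⟩
  simpa only [Function.iterate_succ_apply] using hd s.castSucc

/-- Drop the first matched pair and shift the second orbit forward by one step. -/
theorem mem_fitSet_apply_right_of_succ_mem_fitSet (h : k + 1 ∈ fitSet T δ n x y) :
    k ∈ fitSet T δ n x (T y) := by
  obtain ⟨i, j, hi, hj, hin, hjn, hd⟩ := h
  have hj_pos : ∀ s : Fin k, 1 ≤ j s.succ := fun s => Nat.one_le_of_lt (hj (Fin.succ_pos s))
  refine ⟨fun s => i s.succ, fun s => j s.succ - 1, hi.comp (Fin.strictMono_succ),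
    fun a b hab => Nat.sub_lt_sub_right (hj_pos a) (hj (Fin.succ_lt_succ_iff.2 hab)),
    fun s => hin _, fun s => (Nat.sub_le _ _).trans_lt (hjn _), fun s => ?_⟩
  have := hd s.succ
  rwa [← Nat.sub_add_cancel (hj_pos s), Function.iterate_succ_apply] at this

theorem maxFit_apply_right_le : maxFit T δ n x (T y) ≤ maxFit T δ n x y + 1 := by
  by_contra! h
  exact absurd (le_maxFit_iff.2 (mem_fitSet_of_succ_mem_fitSet_apply_right
    (le_maxFit_iff.1 (Nat.succ_le_of_lt h)))) (by omega)

theorem maxFit_le_maxFit_apply_right : maxFit T δ n x y ≤ maxFit T δ n x (T y) + 1 := by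
  by_contra! h
  exact absurd (le_maxFit_iff.2 (mem_fitSet_apply_right_of_succ_mem_fitSet
    (le_maxFit_iff.1 (Nat.succ_le_of_lt h)))) (by omega)

theorem fbarN_mem_Icc : fbarN T δ n x z ∈ Icc 0 1 := by
  simp only [fbarN, mem_Icc, sub_nonneg, sub_le_self_iff]
  exact ⟨div_le_one_of_le₀ (by exact_mod_cast maxFit_le) n.cast_nonneg, by positivity⟩

theorem isBounded_range_fbarN : Bornology.IsBounded (range fun n => fbarN T δ n x z) :=
  (Metric.isBounded_Icc (0 : ℝ) 1).subset (range_subset_iff.2 fun _ => fbarN_mem_Icc)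

theorem abs_fbarN_apply_right_sub_le :
    |fbarN T δ n x (T y) - fbarN T δ n x y| ≤ 1 / n := by
  have h₁ : (maxFit T δ n x (T y) : ℝ) ≤ maxFit T δ n x y + 1 := by
    exact_mod_cast maxFit_apply_right_le
  have h₂ : (maxFit T δ n x y : ℝ) ≤ maxFit T δ n x (T y) + 1 := by
    exact_mod_cast maxFit_le_maxFit_apply_right
  calc |fbarN T δ n x (T y) - fbarN T δ n x y|
      = |((maxFit T δ n x y : ℝ) - maxFit T δ n x (T y)) / n| := by rw [fbarN, fbarN]; ring_nf
    _ = |(maxFit T δ n x y : ℝ) - maxFit T δ n x (T y)| / n := by rw [abs_div, Nat.abs_cast]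
    _ ≤ 1 / n := div_le_div_of_nonneg_right (abs_sub_le_iff.2 ⟨by linarith, by linarith⟩)
        n.cast_nonneg

theorem fbar_apply_right : fbar T δ x (T y) = fbar T δ x y := by
  have h : Tendsto (fun n : ℕ => fbarN T δ n x (T y) - fbarN T δ n x y) atTop (𝓝 0) :=
    squeeze_zero_norm (fun _ => abs_fbarN_apply_right_sub_le) tendsto_one_div_atTop_nhds_zero_nat
  refine (limsup_le_limsup_of_tendsto_sub isBounded_range_fbarN h).antisymm
    (limsup_le_limsup_of_tendsto_sub isBounded_range_fbarN ?_)
  simpa using h.neg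

theorem fbar_comm : fbar T δ x z = fbar T δ z x := by
  simp only [fbar, fbarN, maxFit_comm (x := x)]

theorem fbarN_antitone : Antitone fun δ => fbarN T δ n x z := fun _ _ h =>
  sub_le_sub_left (div_le_div_of_nonneg_right (Nat.cast_le.2 (maxFit_mono h)) n.cast_nonneg) 1

theorem fbar_antitone : Antitone fun δ => fbar T δ x z := fun _ _ h =>
  limsup_le_limsup (Eventually.of_forall fun _ => fbarN_antitone h)
    (isCoboundedUnder_le_of_le atTop fun _ => fbarN_mem_Icc.1)
    (isBoundedUnder_of ⟨1, fun _ => fbarN_mem_Icc.2⟩)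

theorem rhoFK_apply_right : rhoFK T x (T y) = rhoFK T x y := by
  simp only [rhoFK, fbar_apply_right]

theorem rhoFK_comm : rhoFK T x z = rhoFK T z x := by
  simp only [rhoFK, fbar_comm (x := x)]

theorem rhoFK_apply_left : rhoFK T (T x) y = rhoFK T x y := by
  rw [rhoFK_comm, rhoFK_apply_right, rhoFK_comm]

section BoundedSpace

variable [BoundedSpace X]

theorem fbar_eq_zero_of_diam_lt (hδ : Metric.diam (univ : Set X) < δ) : fbar T δ x z = 0 := by
  have hfull : ∀ n, 0 < n → fbarN T δ n x z = 0 := fun n hn => by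
    have : maxFit T δ n x z = n := maxFit_le.antisymm <| le_maxFit_iff.2
      ⟨Fin.val, Fin.val, Fin.val_strictMono, Fin.val_strictMono, Fin.isLt, Fin.isLt, fun _ =>
        (Metric.dist_le_diam_of_mem BoundedSpace.bounded_univ trivial trivial).trans_lt hδ⟩
    simp [fbarN, this, hn.ne']
  exact (tendsto_const_nhds.congr'
    (eventually_atTop.2 ⟨1, fun n hn => (hfull n hn).symm⟩)).limsup_eq

/-- Boundedness makes the set whose `sInf` defines `rhoFK` nonempty, so that `sInf` is not the
junk value `0`. -/
theorem rhoFK_le_iff {ε : ℝ} (hε : 0 ≤ ε) :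
    rhoFK T x z ≤ ε ↔ ∀ q : ℚ, ε < q → fbar T q x z < q := by
  have hne : {δ : ℝ | 0 < δ ∧ fbar T δ x z < δ}.Nonempty := by
    have := Metric.diam_nonneg (s := (univ : Set X))
    exact ⟨_, by linarith, (fbar_eq_zero_of_diam_lt (lt_add_one _)).trans_lt (by linarith)⟩
  have hbdd : BddBelow {δ : ℝ | 0 < δ ∧ fbar T δ x z < δ} := ⟨0, fun _ hδ => hδ.1.le⟩
  constructor
  · intro h q hq
    obtain ⟨δ, hδ, hδq⟩ := exists_lt_of_csInf_lt hne (h.trans_lt hq)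
    exact (fbar_antitone hδq.le).trans_lt (hδ.2.trans hδq)
  · intro h
    refine le_of_forall_gt_imp_ge_of_dense fun r hr => ?_
    obtain ⟨q, hεq, hqr⟩ := exists_rat_btwn hr
    exact (csInf_le hbdd ⟨hε.trans_lt hεq, h q hεq⟩).trans hqr.le

end BoundedSpace

theorem isOpen_setOf_mem_fitSet (hT : Continuous T) (δ : ℝ) (n k : ℕ) :
    IsOpen {p : X × X | k ∈ fitSet T δ n p.1 p.2} := by
  simp only [fitSet, mem_ofPred_eq, ofPred_exists, ofPred_and]
  refine isOpen_iUnion fun i => isOpen_iUnion fun j =>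
    isOpen_const.inter <| isOpen_const.inter <| isOpen_const.inter <| isOpen_const.inter ?_
  rw [ofPred_forall]
  exact isOpen_iInter_of_finite fun s => isOpen_lt
    (((hT.iterate _).comp continuous_fst).dist ((hT.iterate _).comp continuous_snd))
    continuous_const

theorem lowerSemicontinuous_maxFit (hT : Continuous T) (δ : ℝ) (n : ℕ) :
    LowerSemicontinuous fun p : X × X => maxFit T δ n p.1 p.2 :=
  lowerSemicontinuous_iff_isOpen_preimage.2 fun k => by
    simpa only [preimage, mem_Ioi, Nat.lt_iff_add_one_le, le_maxFit_iff]
      using isOpen_setOf_mem_fitSet hT δ n (k + 1)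

section Measurability

variable [SecondCountableTopology X] [MeasurableSpace X] [BorelSpace X]

theorem measurable_fbar (hT : Continuous T) (δ : ℝ) :
    Measurable fun p : X × X => fbar T δ p.1 p.2 :=
  Measurable.limsup fun n => measurable_const.sub
    ((measurable_from_nat.comp (lowerSemicontinuous_maxFit hT δ n).measurable).div_const _)

theorem measurableSet_setOf_rhoFK_le [BoundedSpace X] (hT : Continuous T) {ε : ℝ}
    (hε : 0 ≤ ε) :
    MeasurableSet {p : X × X | rhoFK T p.1 p.2 ≤ ε} := by
  simp_rw [rhoFK_le_iff hε, ofPred_forall]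
  exact .iInter fun q => .iInter fun _ => measurableSet_lt (measurable_fbar hT q) measurable_const

end Measurability

end FKPaper

open FKPaper Filter Topology MeasureTheory Set

theorem measure_FKball_ae_const_general {X : Type*} [MetricSpace X] [CompactSpace X]
    (T : X → X) (hT : Continuous T) [MeasurableSpace X] [BorelSpace X]
    (μ : Measure X) [IsProbabilityMeasure μ] (hμ : Ergodic T μ)
    (ε : ℝ) (hε : 0 < ε) :
    (∀ᵐ x ∂μ, μ {y : X | rhoFK T x y ≤ ε} =
        (μ.prod μ) {p : X × X | rhoFK T p.1 p.2 ≤ ε}) ∧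
    ((μ.prod μ) {p : X × X | rhoFK T p.1 p.2 ≤ ε} = 0 ∨
      (μ.prod μ) {p : X × X | rhoFK T p.1 p.2 ≤ ε} = 1) := by
  set A := {p : X × X | rhoFK T p.1 p.2 ≤ ε}
  have hA : MeasurableSet A := measurableSet_setOf_rhoFK_le hT hε.le
  have hae : ∀ᵐ x ∂μ, μ (Prod.mk x ⁻¹' A) = μ.prod μ A :=
    hμ.toPreErgodic.ae_measure_prodMk_eq_prod hA fun x => by
      ext y; simp only [A, mem_preimage, mem_ofPred_eq, rhoFK_apply_left]
  refine ⟨hae, ?_⟩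
  obtain ⟨x, hx⟩ := hae.exists
  rw [← hx]
  exact hμ.prob_eq_zero_or_one (measurable_prodMk_left hA) <| by
    ext y; simp only [A, mem_preimage, mem_ofPred_eq, rhoFK_apply_right]

/-- `x ↦ μ(B_ε^FK(x))` is `μ`-a.e. equal to the constant
`(μ×μ)({ρ_FK ≤ ε})`, which is `0` or `1`. -/
theorem measure_FKball_ae_const {X : Type*} [MetricSpace X] [CompactSpace X] [Nonempty X]
    (T : X → X) (hT : Continuous T) [MeasurableSpace X] [BorelSpace X]
    (μ : Measure X) [IsProbabilityMeasure μ] (hμ : Ergodic T μ)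
    (ε : ℝ) (hε : 0 < ε) :
    (∀ᵐ x ∂μ, μ {y : X | rhoFK T x y ≤ ε} =
        (μ.prod μ) {p : X × X | rhoFK T p.1 p.2 ≤ ε}) ∧
    ((μ.prod μ) {p : X × X | rhoFK T p.1 p.2 ≤ ε} = 0 ∨
      (μ.prod μ) {p : X × X | rhoFK T p.1 p.2 ≤ ε} = 1) :=
  measure_FKball_ae_const_general T hT μ hμ ε hε
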